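/- Let 𝒯* ⊆ 𝒯 be an optimal r-test set with m* = |𝒯*|. Then any run of SGA returns an r-test set of size at most H_{n(n−1)/2}·m*, where H_N = ∑_{i=1}^{N} 1/i is the N-th harmonic number. -/

import Mathlib

open Finset

/-- The set of item pairs: 2-element subsets of the item set `S` (here the whole type `α`). -/
def itemPairs (α : Type*) [Fintype α] [DecidableEq α] : Finset (Finset α) :=
  Finset.univ.filter fun a => a.card = 2

/-- `⊥(a, F)`: the number of tests in the family `F` that differentiate the item pair `a`,
i.e. the tests `T` with `|T ∩ a| = 1`. -/
def diffBy {α : Type*} [DecidableEq α] (a : Finset α) (F : Finset (Finset α)) : ℕ :=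
  (F.filter fun T => (T ∩ a).card = 1).card

/-- `F` is an `r`-test set for the collection `𝒯`: `F ⊆ 𝒯` and every item pair is
differentiated by at least `r` tests of `F`. -/
def IsRTestSet {α : Type*} [Fintype α] [DecidableEq α]
    (r : ℕ) (𝒯 F : Finset (Finset α)) : Prop :=
  F ⊆ 𝒯 ∧ ∀ a ∈ itemPairs α, r ≤ diffBy a F

/-- The differentiation measure `#(T̄) = ∑_a max (r - ⊥(a,T̄), 0)` (truncated subtraction). -/
def dmeasure {α : Type*} [Fintype α] [DecidableEq α]
    (r : ℕ) (F : Finset (Finset α)) : ℕ :=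
  ∑ a ∈ itemPairs α, (r - diffBy a F)

/-- A run of the set cover greedy algorithm SGA: a sequence of distinct tests from `𝒯`,
each chosen greedily to minimize the differentiation measure of the selected family,
selections continue while the measure is positive, and the final measure is `0`. -/
structure SGARun {α : Type*} [Fintype α] [DecidableEq α]
    (r : ℕ) (𝒯 : Finset (Finset α)) (L : List (Finset α)) : Prop where
  nodup : L.Nodup
  mem : ∀ T ∈ L, T ∈ 𝒯
  greedy : ∀ i : Fin L.length, ∀ T ∈ 𝒯, T ∉ (L.take i).toFinset →
      dmeasure r (insert (L.get i) (L.take i).toFinset) ≤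
        dmeasure r (insert T (L.take i).toFinset)
  pos : ∀ i < L.length, 0 < dmeasure r (L.take i).toFinset
  done : dmeasure r L.toFinset = 0

/-!
For every item pair `a` fix `r` tests `A a ⊆ F*` that differentiate it. During the run keep a
subset `charged a (A a) P` of `A a` that avoids the chosen tests `P` and whose size is the current
deficit `r - ⊥(a, P)`: each chosen test differentiating `a` removes one member, itself if it is one.
The load of `T ∈ F*`, the number of pairs still charged to `T`, never increases, is at most
`n(n-1)/2`, and the loads add up to the measure `#`. Choosing `T` would lower `#` by at least
its load, so the greedy step lowers `#` by some `d ≥ load T` for every `T ∈ F*`; hence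
`1 = ∑_T Δ(load T) / d ≤ ∑_T Δ(H (load T))`, and summing over the run telescopes to
`k ≤ ∑_T H (initial load T) ≤ m* · H_{n(n-1)/2}`.
-/

lemma harmonic_monotone : Monotone harmonic :=
  monotone_nat_of_le_succ fun n => by
    rw [harmonic_succ]; exact le_add_of_nonneg_right (by positivity)

lemma div_le_harmonic_sub_harmonic {w v d : ℕ} (hwv : w ≤ v) (hvd : v ≤ d) :
    ((v : ℚ) - w) / d ≤ harmonic v - harmonic w := by
  induction v, hwv using Nat.le_induction with
  | base => simp
  | succ v hwv ih =>
    have hstep : (1 : ℚ) / d ≤ (↑(v + 1))⁻¹ := by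
      rw [one_div]; exact inv_anti₀ (by positivity) (by exact_mod_cast hvd)
    calc ((↑(v + 1) : ℚ) - w) / d = ((v : ℚ) - w) / d + 1 / d := by push_cast; ring
      _ ≤ harmonic v - harmonic w + (↑(v + 1))⁻¹ := add_le_add (ih (by omega)) hstep
      _ = harmonic (v + 1) - harmonic w := by rw [harmonic_succ]; ring

section Charging

variable {ι : Type*} {F : Finset ι}

lemma one_le_sum_harmonic_sub_harmonic {v w : ι → ℕ} (hwv : ∀ T ∈ F, w T ≤ v T)
    (hdrop : ∀ T ∈ F, ∑ S ∈ F, w S + v T ≤ ∑ S ∈ F, v S) (hpos : 0 < ∑ S ∈ F, v S) :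
    1 ≤ ∑ T ∈ F, (harmonic (v T) - harmonic (w T)) := by
  set d := ∑ S ∈ F, v S - ∑ S ∈ F, w S with hd_def
  obtain ⟨T₀, hT₀, hv₀⟩ := sum_pos_iff.1 hpos
  have hvd : ∀ T ∈ F, v T ≤ d := fun T hT => by have := hdrop T hT; omega
  have hsum : ∑ T ∈ F, ((v T : ℚ) - w T) = d := by
    rw [sum_sub_distrib, hd_def, Nat.cast_sub (by have := hdrop T₀ hT₀; omega)]
    push_cast; rfl
  have hd : (d : ℚ) ≠ 0 := by exact_mod_cast (hv₀.trans_le (hvd T₀ hT₀)).ne'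
  calc 1 = ∑ T ∈ F, ((v T : ℚ) - w T) / d := by rw [← sum_div, hsum, div_self hd]
    _ ≤ _ := sum_le_sum fun T hT => div_le_harmonic_sub_harmonic (hwv T hT) (hvd T hT)

theorem le_sum_harmonic_of_charging {u : ι → ℕ → ℕ} {k : ℕ}
    (hanti : ∀ i < k, ∀ T ∈ F, u T (i + 1) ≤ u T i)
    (hdrop : ∀ i < k, ∀ T ∈ F, ∑ S ∈ F, u S (i + 1) + u T i ≤ ∑ S ∈ F, u S i)
    (hpos : ∀ i < k, 0 < ∑ S ∈ F, u S i) :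
    (k : ℚ) ≤ ∑ T ∈ F, harmonic (u T 0) :=
  calc (k : ℚ) = ∑ i ∈ range k, 1 := by simp
    _ ≤ ∑ i ∈ range k, ∑ T ∈ F, (harmonic (u T i) - harmonic (u T (i + 1))) :=
        sum_le_sum fun i hi => one_le_sum_harmonic_sub_harmonic (hanti i (mem_range.1 hi))
          (hdrop i (mem_range.1 hi)) (hpos i (mem_range.1 hi))
    _ = ∑ T ∈ F, (harmonic (u T 0) - harmonic (u T k)) := by
        rw [sum_comm]; exact sum_congr rfl fun T _ => sum_range_sub' _ k
    _ ≤ ∑ T ∈ F, harmonic (u T 0) :=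
        sum_le_sum fun T _ => sub_le_self _ (by simpa using harmonic_monotone (u T k).zero_le)

end Charging

section TestSets

variable {α : Type*} [DecidableEq α]

lemma List.toFinset_append_singleton (l : List α) (x : α) :
    (l ++ [x]).toFinset = insert x l.toFinset := by
  ext; simp

lemma diffBy_mono {a : Finset α} {F F' : Finset (Finset α)} (h : F ⊆ F') :
    diffBy a F ≤ diffBy a F' :=
  card_le_card (filter_subset_filter _ h)

lemma diffBy_insert {a T : Finset α} {F : Finset (Finset α)} (hT : T ∉ F) :
    diffBy a (insert T F) = diffBy a F + if (T ∩ a).card = 1 then 1 else 0 := by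
  unfold diffBy
  rw [filter_insert]
  split_ifs
  · exact card_insert_of_notMem fun h => hT (mem_filter.1 h).1
  · rfl

variable [Fintype α]

lemma card_itemPairs : (itemPairs α).card = Fintype.card α * (Fintype.card α - 1) / 2 := by
  have : itemPairs α = powersetCard 2 univ := by ext; simp [itemPairs, mem_powersetCard]
  rw [this, card_powersetCard, card_univ, Nat.choose_two_right]

lemma dmeasure_anti {r : ℕ} {F F' : Finset (Finset α)} (h : F ⊆ F') :
    dmeasure r F' ≤ dmeasure r F :=
  sum_le_sum fun _ _ => Nat.sub_le_sub_left (diffBy_mono h) r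

lemma dmeasure_insert_add_card_le {r : ℕ} {T : Finset α} {F P : Finset (Finset α)} (hT : T ∉ F)
    (hP : P ⊆ itemPairs α) (h : ∀ a ∈ P, (T ∩ a).card = 1 ∧ diffBy a F < r) :
    dmeasure r (insert T F) + P.card ≤ dmeasure r F := by
  have hcard : P.card = ∑ a ∈ itemPairs α, if a ∈ P then 1 else 0 := by
    rw [sum_boole, filter_mem_eq_inter, inter_eq_right.2 hP, Nat.cast_id]
  rw [dmeasure, dmeasure, hcard, ← sum_add_distrib]
  refine sum_le_sum fun a _ => ?_
  rw [diffBy_insert hT]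
  split_ifs with hTa haP haP
  · have := (h a haP).2; omega
  · omega
  · exact absurd (h a haP).1 hTa
  · omega

end TestSets

section Charged

variable {α : Type*} [DecidableEq α]

noncomputable def chargedStep (a T : Finset α) (g : Finset (Finset α)) : Finset (Finset α) :=
  if (T ∩ a).card = 1 then
    (exists_subset_card_eq (pred_card_le_card_erase (s := g) (a := T))).choose
  else g

noncomputable def charged (a : Finset α) (A : Finset (Finset α)) (P : List (Finset α)) :
    Finset (Finset α) :=
  P.foldl (fun g T => chargedStep a T g) A

variable {a T : Finset α} {g A : Finset (Finset α)} {P : List (Finset α)}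

lemma chargedStep_of_diff (h : (T ∩ a).card = 1) :
    chargedStep a T g ⊆ g.erase T ∧ (chargedStep a T g).card = g.card - 1 := by
  rw [chargedStep, if_pos h]
  exact (exists_subset_card_eq pred_card_le_card_erase).choose_spec

lemma chargedStep_of_not_diff (h : (T ∩ a).card ≠ 1) : chargedStep a T g = g :=
  if_neg h

lemma chargedStep_subset : chargedStep a T g ⊆ g := by
  by_cases h : (T ∩ a).card = 1
  · exact (chargedStep_of_diff h).1.trans (erase_subset _ _)
  · exact (chargedStep_of_not_diff h).subset

lemma charged_append_singleton :
    charged a A (P ++ [T]) = chargedStep a T (charged a A P) := by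
  simp [charged]

lemma charged_append_singleton_subset : charged a A (P ++ [T]) ⊆ charged a A P :=
  charged_append_singleton (a := a) ▸ chargedStep_subset

lemma charged_subset : charged a A P ⊆ A := by
  induction P using List.reverseRecOn with
  | nil => exact Subset.rfl
  | append_singleton P T ih => exact charged_append_singleton_subset.trans ih

lemma card_charged (hP : P.Nodup) : (charged a A P).card = A.card - diffBy a P.toFinset := by
  induction P using List.reverseRecOn with
  | nil => simp [charged, diffBy]
  | append_singleton P T ih =>
    obtain ⟨hP, -, hTP⟩ := List.nodup_append.1 hP
    have hT : T ∉ P.toFinset := fun h => hTP T (List.mem_toFinset.1 h) T (by simp) rfl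
    rw [charged_append_singleton, List.toFinset_append_singleton, diffBy_insert hT]
    by_cases h : (T ∩ a).card = 1
    · rw [(chargedStep_of_diff h).2, ih hP, if_pos h]; omega
    · rw [chargedStep_of_not_diff h, ih hP, if_neg h, add_zero]

lemma notMem_charged (hA : ∀ T ∈ A, (T ∩ a).card = 1) (hT : T ∈ P) : T ∉ charged a A P := by
  induction P using List.reverseRecOn with
  | nil => simp at hT
  | append_singleton P T' ih =>
    rcases List.mem_append.1 hT with hT | hT
    · exact fun h => ih hT (charged_append_singleton_subset h)
    · rw [List.mem_singleton.1 hT, charged_append_singleton]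
      by_cases h : (T' ∩ a).card = 1
      · exact fun h' => (notMem_erase _ _) ((chargedStep_of_diff h).1 h')
      · rw [chargedStep_of_not_diff h]
        exact fun h' => h (hA _ (charged_subset h'))

end Charged

section Load

variable {α : Type*} [Fintype α] [DecidableEq α]

def IsDemandAssignment (r : ℕ) (F : Finset (Finset α)) (A : Finset α → Finset (Finset α)) :
    Prop :=
  ∀ a ∈ itemPairs α, A a ⊆ F ∧ (A a).card = r ∧ ∀ T ∈ A a, (T ∩ a).card = 1

lemma IsRTestSet.exists_isDemandAssignment {r : ℕ} {𝒯 F : Finset (Finset α)}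
    (hF : IsRTestSet r 𝒯 F) : ∃ A, IsDemandAssignment r F A := by
  choose A hAsub hAcard using fun a : Finset α =>
    exists_subset_card_eq (min_le_right r (diffBy a F))
  refine ⟨A, fun a ha => ⟨(hAsub a).trans (filter_subset _ _), ?_,
    fun T hT => (mem_filter.1 (hAsub a hT)).2⟩⟩
  rw [hAcard, min_eq_left (hF.2 a ha)]

noncomputable def load (A : Finset α → Finset (Finset α)) (P : List (Finset α)) (T : Finset α) :
    ℕ :=
  #{a ∈ itemPairs α | T ∈ charged a (A a) P}

variable {r : ℕ} {F : Finset (Finset α)} {A : Finset α → Finset (Finset α)}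
  {P : List (Finset α)} {T : Finset α}

lemma load_le_card_itemPairs : load A P T ≤ (itemPairs α).card :=
  card_filter_le _ _

lemma load_append_singleton_le {T' : Finset α} : load A (P ++ [T']) T ≤ load A P T :=
  card_le_card (monotone_filter_right _ fun _ _ h => charged_append_singleton_subset h)

lemma sum_load_eq_dmeasure (hA : IsDemandAssignment r F A) (hP : P.Nodup) :
    ∑ T ∈ F, load A P T = dmeasure r P.toFinset := by
  calc ∑ T ∈ F, load A P T
      = ∑ T ∈ F, #(bipartiteAbove (fun T a => T ∈ charged a (A a) P) (itemPairs α) T) := rfl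
    _ = ∑ a ∈ itemPairs α, #(bipartiteBelow (fun T a => T ∈ charged a (A a) P) F a) :=
        sum_card_bipartiteAbove_eq_sum_card_bipartiteBelow _
    _ = ∑ a ∈ itemPairs α, (r - diffBy a P.toFinset) := sum_congr rfl fun a ha => by
        rw [bipartiteBelow, filter_mem_eq_inter,
          inter_eq_right.2 (charged_subset.trans (hA a ha).1), card_charged hP, (hA a ha).2.1]

lemma dmeasure_insert_add_load_le (hA : IsDemandAssignment r F A) (hP : P.Nodup) :
    dmeasure r (insert T P.toFinset) + load A P T ≤ dmeasure r P.toFinset := by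
  by_cases hT : T ∈ P.toFinset
  · have hload : load A P T = 0 := card_eq_zero.2 <| filter_eq_empty_iff.2 fun a ha =>
      notMem_charged (hA a ha).2.2 (List.mem_toFinset.1 hT)
    rw [insert_eq_of_mem hT, hload, add_zero]
  · refine dmeasure_insert_add_card_le hT (filter_subset _ _) fun a ha => ?_
    obtain ⟨ha, hTa⟩ := mem_filter.1 ha
    have hpos : 0 < (charged a (A a) P).card := card_pos.2 ⟨T, hTa⟩
    rw [card_charged hP, (hA a ha).2.1] at hpos
    exact ⟨(hA a ha).2.2 T (charged_subset hTa), by omega⟩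

end Load

namespace SGARun

variable {α : Type*} [Fintype α] [DecidableEq α] {r : ℕ} {𝒯 : Finset (Finset α)}
  {L : List (Finset α)}

lemma dmeasure_take_succ_le (hrun : SGARun r 𝒯 L) {i : ℕ} (hi : i < L.length)
    {T : Finset α} (hT : T ∈ 𝒯) :
    dmeasure r (L.take (i + 1)).toFinset ≤ dmeasure r (insert T (L.take i).toFinset) := by
  rw [← List.take_concat_get' L i hi, List.toFinset_append_singleton]
  by_cases hTP : T ∈ (L.take i).toFinset
  · rw [insert_eq_of_mem hTP]
    exact dmeasure_anti (subset_insert _ _)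
  · exact hrun.greedy ⟨i, hi⟩ T hT hTP

end SGARun

theorem stmt_11_general {α : Type*} [Fintype α] [DecidableEq α]
    (r : ℕ)
    (𝒯 Fstar : Finset (Finset α)) (hFstar : IsRTestSet r 𝒯 Fstar)
    (L : List (Finset α)) (hrun : SGARun r 𝒯 L) :
    (L.length : ℝ) ≤
      (∑ i ∈ Finset.range (Fintype.card α * (Fintype.card α - 1) / 2),
          (1 : ℝ) / ((i : ℝ) + 1)) * (Fstar.card : ℝ) := by
  obtain ⟨A, hA⟩ := hFstar.exists_isDemandAssignment
  have hnodup : ∀ i, (L.take i).Nodup := fun i => hrun.nodup.sublist (List.take_sublist _ _)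
  have hsum : ∀ i, ∑ T ∈ Fstar, load A (L.take i) T = dmeasure r (L.take i).toFinset :=
    fun i => sum_load_eq_dmeasure hA (hnodup i)
  have hsteps : (L.length : ℚ) ≤ ∑ T ∈ Fstar, harmonic (load A (L.take 0) T) := by
    refine le_sum_harmonic_of_charging (u := fun T i => load A (L.take i) T)
      (fun i hi T _ => ?_) (fun i hi T hT => ?_) fun i hi => ?_
    · rw [← List.take_concat_get' L i hi]
      exact load_append_singleton_le
    · rw [hsum, hsum]
      exact (Nat.add_le_add_right (hrun.dmeasure_take_succ_le hi (hFstar.1 hT)) _).trans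
        (dmeasure_insert_add_load_le hA (hnodup i))
    · rw [hsum]
      exact hrun.pos i hi
  have hloads : ∑ T ∈ Fstar, harmonic (load A (L.take 0) T) ≤
      Fstar.card * harmonic (Fintype.card α * (Fintype.card α - 1) / 2) := by
    rw [← card_itemPairs, ← nsmul_eq_mul]
    exact sum_le_card_nsmul _ _ _ fun T _ => harmonic_monotone load_le_card_itemPairs
  have hharmonic : ∀ N, ∑ i ∈ range N, (1 : ℝ) / ((i : ℝ) + 1) = (harmonic N : ℝ) := by
    simp [harmonic]
  rw [hharmonic, mul_comm]
  exact_mod_cast hsteps.trans hloads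

/-- any run of SGA returns an `r`-test set of size at most
`H_{n(n−1)/2}·m*`, where `H_N = ∑_{i=1}^N 1/i`. -/
theorem stmt_11 {α : Type*} [Fintype α] [DecidableEq α]
    (r : ℕ) (hr : 1 ≤ r) (hn : 2 ≤ Fintype.card α)
    (𝒯 Fstar : Finset (Finset α)) (hFstar : IsRTestSet r 𝒯 Fstar)
    (hopt : ∀ F : Finset (Finset α), IsRTestSet r 𝒯 F → Fstar.card ≤ F.card)
    (L : List (Finset α)) (hrun : SGARun r 𝒯 L) :
    (L.length : ℝ) ≤
      (∑ i ∈ Finset.range (Fintype.card α * (Fintype.card α - 1) / 2),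
          (1 : ℝ) / ((i : ℝ) + 1)) * (Fstar.card : ℝ) :=
  stmt_11_general r 𝒯 Fstar hFstar L hrun
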